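/- arXiv:2105.12796 — 3 statements merged into one kernel-verified Lean document; each statement's English description precedes it below -/
import Mathlib

section
/- Let X be a real Banach space, let a < b be real numbers and let 1 < p < ∞. Suppose f, g : ℝ → X are such that g is strongly measurable with ∫_a^b ‖g(τ)‖^p dτ < ∞, and f(t) − f(s) = ∫_s^t g(τ) dτ (Bochner integral) for all s, t ∈ [a,b]. Then for every t ∈ [a,b], ‖f(t)‖ ≤ (b−a)^{−1/p} (∫_a^b ‖f(τ)‖^p dτ)^{1/p} + (b−a)^{1−1/p} (∫_a^b ‖g(τ)‖^p dτ)^{1/p}; in particular the supremum of ‖f‖ on [a,b] is bounded by a constant (depending only on p and b−a) times the W^1_p norm of f. -/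
open MeasureTheory Set

/-- Uniform-bound part (case `m = 1`) of the generalized Sobolev embedding
`W^1_p([a,b], X) ↪ C^{0, 1-1/p}([a,b], X)` for Banach-space-valued functions:
if `f ∈ W^1_p([a,b], X)` with weak derivative `g` (expressed via the
fundamental theorem of calculus with a Bochner integral), then for every
`t ∈ [a,b]`,
`‖f t‖ ≤ (b-a)^{-1/p} ‖f‖_{L_p([a,b])} + (b-a)^{1-1/p} ‖g‖_{L_p([a,b])}`. -/
theorem sobolev_embedding_sup_bound
    {X : Type*} [NormedAddCommGroup X] [NormedSpace ℝ X] [CompleteSpace X]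
    (a b p : ℝ) (hab : a < b) (hp : 1 < p)
    (f g : ℝ → X)
    (hg_meas : AEStronglyMeasurable g (volume.restrict (Icc a b)))
    (hg_int : IntegrableOn (fun τ => ‖g τ‖ ^ p) (Icc a b))
    (hftc : ∀ s ∈ Icc a b, ∀ t ∈ Icc a b, f t - f s = ∫ τ in s..t, g τ) :
    ∀ t ∈ Icc a b,
      ‖f t‖ ≤ (b - a) ^ (-(1 / p)) * (∫ τ in Icc a b, ‖f τ‖ ^ p) ^ (1 / p)
        + (b - a) ^ (1 - 1 / p) * (∫ τ in Icc a b, ‖g τ‖ ^ p) ^ (1 / p) := by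
  intro t ht
  have hpq : p.HolderConjugate (Real.conjExponent p) := Real.HolderConjugate.conjExponent hp
  set q : ℝ := Real.conjExponent p with hq_def
  set μ := volume.restrict (Icc a b) with hμ
  have hba : 0 < b - a := sub_pos.2 hab
  have hfin : IsFiniteMeasure μ := by
    constructor
    rw [hμ, Measure.restrict_apply_univ]
    exact measure_Icc_lt_top
  have hμuniv : (μ univ).toReal = b - a := by
    rw [hμ, Measure.restrict_apply_univ, Real.volume_Icc, ENNReal.toReal_ofReal hba.le]
  have hp0 : (0:ℝ) < p := hpq.pos
  have hpne : ENNReal.ofReal p ≠ 0 := by simp [ENNReal.ofReal_eq_zero, not_le, hp0]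
  have h1q : 1 / q = 1 - 1 / p := by
    have := hpq.inv_add_inv_eq_one
    rw [one_div, one_div]; linarith
  -- g is in L^p
  have hgLp : MemLp g (ENNReal.ofReal p) μ := by
    rw [← memLp_norm_rpow_iff hg_meas hpne ENNReal.ofReal_ne_top,
      ENNReal.toReal_ofReal hp0.le, ENNReal.div_self hpne ENNReal.ofReal_ne_top,
      memLp_one_iff_integrable]
    exact hg_int
  have hgInt : Integrable g μ := hgLp.integrable (by
    rw [ENNReal.one_le_ofReal]; exact hp.le)
  -- f is continuous on Icc a b, hence in L^p and bounded
  have hfc : ContinuousOn f (Icc a b) := by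
    have hprim : ContinuousOn (fun s => ∫ τ in a..s, g τ) (Icc a b) := by
      have h := intervalIntegral.continuousOn_primitive_interval
        (a := a) (b := b) (μ := volume) (f := g) (by rwa [uIcc_of_le hab.le])
      rwa [uIcc_of_le hab.le] at h
    have : ContinuousOn (fun s => f a + ∫ τ in a..s, g τ) (Icc a b) :=
      continuousOn_const.add hprim
    refine this.congr fun s hs => ?_
    have := hftc a (left_mem_Icc.2 hab.le) s hs
    show f s = f a + ∫ τ in a..s, g τ
    rw [← this]; abel
  have hfm : AEStronglyMeasurable f μ := hfc.aestronglyMeasurable measurableSet_Icc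
  obtain ⟨C, hC⟩ := isCompact_Icc.exists_bound_of_continuousOn hfc
  have hfLp : MemLp f (ENNReal.ofReal p) μ :=
    MemLp.of_bound hfm C (by
      rw [hμ, ae_restrict_iff' measurableSet_Icc]
      exact ae_of_all _ hC)
  have hfInt : Integrable f μ := hfLp.integrable (by
    rw [ENNReal.one_le_ofReal]; exact hp.le)
  -- Hölder inequality with constant function 1
  have holder : ∀ (h : ℝ → X), MemLp h (ENNReal.ofReal p) μ →
      ∫ τ, ‖h τ‖ ∂μ ≤ (∫ τ, ‖h τ‖ ^ p ∂μ) ^ (1 / p) * (b - a) ^ (1 / q) := by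
    intro h hh
    have h1 : MemLp (fun _ : ℝ => (1:ℝ)) (ENNReal.ofReal q) μ := memLp_const 1
    have key := MeasureTheory.integral_mul_norm_le_Lp_mul_Lq hpq hh.norm h1
    simpa [norm_one, Real.norm_eq_abs, abs_of_nonneg (norm_nonneg _), Real.one_rpow,
      integral_const, measureReal_def, hμuniv, smul_eq_mul, mul_one] using key
  -- pointwise bound for each s
  set Cg := ∫ τ, ‖g τ‖ ∂μ with hCg_def
  have hptwise : ∀ s ∈ Icc a b, ‖f t‖ ≤ ‖f s‖ + Cg := by
    intro s hs
    have h1 : ‖f t - f s‖ ≤ Cg := by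
      rw [hftc s hs t ht]
      refine intervalIntegral.norm_integral_le_integral_norm_uIoc.trans ?_
      have hsub : uIoc s t ⊆ Icc a b := uIoc_subset_uIcc.trans (uIcc_subset_Icc hs ht)
      exact setIntegral_mono_set hgInt.norm (ae_of_all _ fun τ => norm_nonneg _)
        (HasSubset.Subset.eventuallyLE hsub)
    calc ‖f t‖ = ‖f s + (f t - f s)‖ := by rw [add_sub_cancel]
      _ ≤ ‖f s‖ + ‖f t - f s‖ := norm_add_le _ _
      _ ≤ ‖f s‖ + Cg := by linarith
  -- average over s ∈ Icc a b
  have havg : (b - a) * ‖f t‖ ≤ (∫ τ, ‖f τ‖ ∂μ) + (b - a) * Cg := by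
    have h1 : ∫ _ : ℝ, ‖f t‖ ∂μ ≤ ∫ s, (‖f s‖ + Cg) ∂μ := by
      rw [hμ]
      refine setIntegral_mono_on (integrable_const _)
        (hfInt.norm.add (integrable_const _)) measurableSet_Icc ?_
      intro s hs; exact hptwise s hs
    rw [integral_const, measureReal_def, hμuniv, smul_eq_mul,
      integral_add hfInt.norm (integrable_const _), integral_const, measureReal_def, hμuniv,
      smul_eq_mul] at h1
    linarith
  have hfH := holder f hfLp
  have hgH := holder g hgLp
  have hCgnn : (0:ℝ) ≤ Cg := integral_nonneg fun τ => norm_nonneg _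
  have hfint_nn : (0:ℝ) ≤ ∫ τ, ‖f τ‖ ∂μ := integral_nonneg fun τ => norm_nonneg _
  -- combine
  have hmain : ‖f t‖ ≤ (b - a)⁻¹ * (∫ τ, ‖f τ‖ ∂μ) + Cg := by
    have h2 : (b - a) * ‖f t‖ ≤ (b - a) * ((b - a)⁻¹ * (∫ τ, ‖f τ‖ ∂μ) + Cg) := by
      rw [mul_add, ← mul_assoc, mul_inv_cancel₀ hba.ne', one_mul]
      linarith
    exact le_of_mul_le_mul_left h2 hba
  have e1 : (b - a)⁻¹ * (b - a) ^ (1 / q) = (b - a) ^ (-(1 / p)) := by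
    rw [← Real.rpow_neg_one (b - a), ← Real.rpow_add hba, h1q]
    ring_nf
  have e2 : (b - a) ^ (1 / q) = (b - a) ^ (1 - 1 / p) := by rw [h1q]
  calc ‖f t‖ ≤ (b - a)⁻¹ * (∫ τ, ‖f τ‖ ∂μ) + Cg := hmain
    _ ≤ (b - a)⁻¹ * ((∫ τ, ‖f τ‖ ^ p ∂μ) ^ (1 / p) * (b - a) ^ (1 / q))
        + (∫ τ, ‖g τ‖ ^ p ∂μ) ^ (1 / p) * (b - a) ^ (1 / q) := by
      have := mul_le_mul_of_nonneg_left hfH (inv_nonneg.2 hba.le)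
      linarith
    _ = (b - a) ^ (-(1 / p)) * (∫ τ, ‖f τ‖ ^ p ∂μ) ^ (1 / p)
        + (b - a) ^ (1 - 1 / p) * (∫ τ, ‖g τ‖ ^ p ∂μ) ^ (1 / p) := by
      rw [← e1, ← e2]; ring
end

section
/- Let V be a real inner product space, let T > 0, μ > 0 and C ≥ 0. Let B, F : ℝ → (V →L V →L ℝ) assign to each time a continuous bilinear form on V, and assume: (a) B(t)(w,w) ≥ μ‖w‖² for all t ∈ [0,T] and w ∈ V; (b) |F(t)(w,v)| ≤ C‖w‖‖v‖ for all t ∈ [0,T] and w, v ∈ V. Let u, u' : ℝ → V be such that u is continuous on [0,T], u has derivative u'(t) at every t ∈ [0,T], u(0) = 0, for every v ∈ V the map τ ↦ F(τ)(u(τ), v) is continuous on [0,T], and for every t ∈ [0,T] and every v ∈ V the identity ⟨u'(t), v⟩ + B(t)(u(t), v) = ∫_0^t F(τ)(u(τ), v) dτ holds. Then u(t) = 0 for all t ∈ [0,T]. -/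
open MeasureTheory Set
open scoped RealInnerProductSpace

/-- Strong-solution form of Lemma 4.1 of the paper (uniqueness for the
linear parabolic problem): if `B(t)` is a coercive time-dependent bilinear
form, `F(t)` a uniformly bounded bilinear map, and `u` a differentiable
function with `u(0) = 0` satisfying
`⟨u'(t), v⟩ + B(t)(u(t), v) = ∫_0^t F(τ)(u(τ), v) dτ`
for all `t ∈ [0,T]` and all `v`, then `u ≡ 0` on `[0,T]`. -/
theorem parabolic_uniqueness
    {V : Type*} [NormedAddCommGroup V] [InnerProductSpace ℝ V]
    (T : ℝ) (hT : 0 < T) (μ C : ℝ) (hμ : 0 < μ) (hC : 0 ≤ C)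
    (B F : ℝ → (V →L[ℝ] V →L[ℝ] ℝ))
    (hB : ∀ t ∈ Icc (0 : ℝ) T, ∀ w : V, μ * ‖w‖ ^ 2 ≤ B t w w)
    (hF : ∀ t ∈ Icc (0 : ℝ) T, ∀ w v : V, |F t w v| ≤ C * ‖w‖ * ‖v‖)
    (u u' : ℝ → V)
    (hu_cont : ContinuousOn u (Icc (0 : ℝ) T))
    (hu_deriv : ∀ t ∈ Icc (0 : ℝ) T, HasDerivAt u (u' t) t)
    (hu0 : u 0 = 0)
    (hF_cont : ∀ v : V, ContinuousOn (fun τ => F τ (u τ) v) (Icc (0 : ℝ) T))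
    (heq : ∀ t ∈ Icc (0 : ℝ) T, ∀ v : V,
      ⟪u' t, v⟫ + B t (u t) v = ∫ τ in (0 : ℝ)..t, F τ (u τ) v) :
    ∀ t ∈ Icc (0 : ℝ) T, u t = 0 := by
  set y : ℝ → ℝ := fun t => ⟪u t, u t⟫ with hy_def
  have hyy : ∀ s : ℝ, y s = ‖u s‖ ^ 2 := fun s => real_inner_self_eq_norm_sq _
  have hy_nonneg : ∀ s : ℝ, 0 ≤ y s := fun s => real_inner_self_nonneg
  have hy_cont : ContinuousOn y (Icc (0 : ℝ) T) := hu_cont.inner hu_cont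
  -- η is the primitive of y
  set η : ℝ → ℝ := fun t => ∫ τ in (0 : ℝ)..t, y τ with hη_def
  have hyIntT : IntervalIntegrable y volume 0 T := by
    apply ContinuousOn.intervalIntegrable
    rwa [uIcc_of_le hT.le]
  have hη_cont : ContinuousOn η (Icc (0 : ℝ) T) := by
    have := intervalIntegral.continuousOn_primitive_interval'
      (μ := volume) (f := y) (b₁ := 0) (b₂ := T) (a := 0) hyIntT
      (by rw [uIcc_of_le hT.le]; exact left_mem_Icc.2 hT.le)
    rwa [uIcc_of_le hT.le] at this
  have hη_nonneg : ∀ t ∈ Icc (0 : ℝ) T, 0 ≤ η t := fun t ht =>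
    intervalIntegral.integral_nonneg ht.1 fun τ _ => hy_nonneg τ
  -- derivative of y
  have hy_deriv : ∀ t ∈ Icc (0 : ℝ) T,
      HasDerivAt y (⟪u t, u' t⟫ + ⟪u' t, u t⟫) t := fun t ht =>
    HasDerivAt.inner ℝ (hu_deriv t ht) (hu_deriv t ht)
  -- derivative of η from the right
  have hη_deriv : ∀ t ∈ Ico (0 : ℝ) T, HasDerivWithinAt η (y t) (Ici t) t := by
    intro t ht
    have htT : t ∈ Icc (0 : ℝ) T := ⟨ht.1, ht.2.le⟩
    have hyInt : IntervalIntegrable y volume 0 t := by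
      apply ContinuousOn.intervalIntegrable
      apply hy_cont.mono
      rw [uIcc_of_le ht.1]
      exact Icc_subset_Icc le_rfl ht.2.le
    have hmemIoi : Icc (0 : ℝ) T ∈ nhdsWithin t (Ioi t) :=
      Icc_mem_nhdsGT_of_mem ht
    have hmeas : StronglyMeasurableAtFilter y (nhdsWithin t (Ioi t)) :=
      (hy_cont.stronglyMeasurableAtFilter_nhdsWithin measurableSet_Icc t).filter_mono
        (nhdsWithin_le_iff.2 hmemIoi)
    have hcont : ContinuousWithinAt y (Ioi t) t :=
      (hy_cont t htT).mono_of_mem_nhdsWithin hmemIoi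
    exact intervalIntegral.integral_hasDerivWithinAt_right hyInt hmeas hcont
  -- the Gronwall function
  set w : ℝ → ℝ := fun t => y t + η t with hw_def
  set w' : ℝ → ℝ := fun t => (⟪u t, u' t⟫ + ⟪u' t, u t⟫) + y t with hw'_def
  have hw_cont : ContinuousOn w (Icc (0 : ℝ) T) := hy_cont.add hη_cont
  have hw_deriv : ∀ t ∈ Ico (0 : ℝ) T, HasDerivWithinAt w (w' t) (Ici t) t := by
    intro t ht
    exact ((hy_deriv t ⟨ht.1, ht.2.le⟩).hasDerivWithinAt).add (hη_deriv t ht)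
  set K : ℝ := C * T + C + 1 with hK_def
  -- the differential inequality
  have hbound : ∀ t ∈ Ico (0 : ℝ) T, w' t ≤ K * w t + 0 := by
    intro t ht
    have htT : t ∈ Icc (0 : ℝ) T := ⟨ht.1, ht.2.le⟩
    -- the two integrands are integrable on [0, t]
    have hsub : Icc (0 : ℝ) t ⊆ Icc 0 T := Icc_subset_Icc le_rfl ht.2.le
    have hInt1 : IntervalIntegrable (fun τ => F τ (u τ) (u t)) volume 0 t := by
      apply ContinuousOn.intervalIntegrable
      rw [uIcc_of_le ht.1]
      exact (hF_cont (u t)).mono hsub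
    have hInt2 : IntervalIntegrable (fun τ => C / 2 * (y τ + y t)) volume 0 t := by
      apply ContinuousOn.intervalIntegrable
      rw [uIcc_of_le ht.1]
      exact (continuousOn_const.mul ((hy_cont.mono hsub).add continuousOn_const))
    have hIle : (∫ τ in (0 : ℝ)..t, F τ (u τ) (u t))
        ≤ ∫ τ in (0 : ℝ)..t, C / 2 * (y τ + y t) := by
      apply intervalIntegral.integral_mono_on ht.1 hInt1 hInt2
      intro τ hτ
      have hτT : τ ∈ Icc (0 : ℝ) T := hsub hτ
      have h1 := hF τ hτT (u τ) (u t)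
      have h2 : F τ (u τ) (u t) ≤ C * ‖u τ‖ * ‖u t‖ := (le_abs_self _).trans h1
      have h3 : 0 ≤ ‖u τ‖ := norm_nonneg _
      have h4 : 0 ≤ ‖u t‖ := norm_nonneg _
      rw [hyy τ, hyy t]
      nlinarith [sq_nonneg (‖u τ‖ - ‖u t‖)]
    -- compute the right-hand integral
    have hyInt : IntervalIntegrable y volume 0 t := by
      apply ContinuousOn.intervalIntegrable
      rw [uIcc_of_le ht.1]
      exact hy_cont.mono hsub
    have hval : (∫ τ in (0 : ℝ)..t, C / 2 * (y τ + y t))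
        = C / 2 * η t + C / 2 * (t * y t) := by
      have : (∫ τ in (0 : ℝ)..t, C / 2 * (y τ + y t))
          = ∫ τ in (0 : ℝ)..t, (C / 2 * y τ + C / 2 * y t) := by
        congr 1; ext τ; ring
      rw [this, intervalIntegral.integral_add (hyInt.const_mul _)
        intervalIntegrable_const, intervalIntegral.integral_const_mul,
        intervalIntegral.integral_const]
      simp [hη_def]
      ring
    -- coercivity
    have hBt : 0 ≤ B t (u t) (u t) := by
      have := hB t htT (u t)
      nlinarith [sq_nonneg ‖u t‖]
    have hinner : ⟪u' t, u t⟫ ≤ C / 2 * η t + C / 2 * (t * y t) := by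
      have := heq t htT (u t)
      have h5 : (∫ τ in (0 : ℝ)..t, F τ (u τ) (u t))
          ≤ C / 2 * η t + C / 2 * (t * y t) := by rw [← hval]; exact hIle
      linarith
    have hcomm : ⟪u t, u' t⟫ = ⟪u' t, u t⟫ := real_inner_comm _ _
    have hηt : 0 ≤ η t := hη_nonneg t htT
    have hyt : 0 ≤ y t := hy_nonneg t
    have ht0 : 0 ≤ t := ht.1
    have htT' : t ≤ T := ht.2.le
    simp only [hw'_def, hw_def, hK_def, hcomm]
    nlinarith [mul_nonneg hC hyt, mul_nonneg (mul_nonneg hC hyt) (sub_nonneg.2 htT'),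
      mul_nonneg hC hηt, mul_nonneg (mul_nonneg hC hηt) (sub_nonneg.2 htT')]
  -- Gronwall
  have hw0 : w 0 ≤ 0 := by
    simp [hw_def, hη_def, hy_def, hu0]
  have key : ∀ t ∈ Icc (0 : ℝ) T, w t ≤ gronwallBound 0 K 0 (t - 0) := by
    apply le_gronwallBound_of_liminf_deriv_right_le hw_cont
      (fun x hx r hr => (hw_deriv x hx).liminf_right_slope_le hr) hw0 hbound
  intro t ht
  have hwt : w t ≤ 0 := by
    have := key t ht
    rwa [gronwallBound_ε0_δ0] at this
  have hyt : y t ≤ 0 := by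
    have := hη_nonneg t ht
    simp only [hw_def] at hwt
    linarith
  have : y t = 0 := le_antisymm hyt (hy_nonneg t)
  rw [hy_def] at this
  exact inner_self_eq_zero.1 this
end

section
/- Let A be a commutative Banach algebra over ℝ with ‖1‖ = 1 (i.e. a complete normed commutative ring and normed ℝ-algebra). For all natural numbers k and M ≥ 1 there exists a constant C = C(k,M) ≥ 0 such that for all k-times continuously differentiable functions u, v : ℝ → A and every t ∈ ℝ, ‖(u^M − v^M)^{(k)}(t)‖ ≤ C · Θ^{M−1} · ∑_{l=0}^{k} ‖(u − v)^{(l)}(t)‖, where Θ := max(1, max_{0≤i≤k} max(‖u^{(i)}(t)‖, ‖v^{(i)}(t)‖)) and h^{(l)} denotes the l-th iterated derivative of h. -/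
open Finset

/-- Uniform bound on iterated derivatives of powers of a function with
bounded derivatives. -/
private lemma pow_deriv_bound {A : Type*} [NormedCommRing A] [NormedAlgebra ℝ A]
    [NormOneClass A] (k : ℕ) :
    ∀ m : ℕ, ∃ c : ℝ, 0 ≤ c ∧ ∀ (f : ℝ → A), ContDiff ℝ (k : ℕ) f →
      ∀ (t : ℝ) (Θ : ℝ), 1 ≤ Θ → (∀ j ≤ k, ‖iteratedFDeriv ℝ j f t‖ ≤ Θ) →
      ∀ a ≤ m, ∀ i ≤ k, ‖iteratedFDeriv ℝ i (fun x => f x ^ a) t‖ ≤ c * Θ ^ a := by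
  intro m
  induction m with
  | zero =>
    refine ⟨1, zero_le_one, fun f hf t Θ hΘ1 hΘ a ha i hi => ?_⟩
    interval_cases a
    simp only [pow_zero, one_mul]
    cases i with
    | zero => simp [norm_iteratedFDeriv_zero]
    | succ n =>
      rw [iteratedFDeriv_const_of_ne (Nat.succ_ne_zero n) (1 : A)]
      simp
  | succ m ih =>
    obtain ⟨c, hc0, hc⟩ := ih
    refine ⟨2 ^ k * max 1 c, by positivity, fun f hf t Θ hΘ1 hΘ a ha i hi => ?_⟩
    have hΘ0 : (0:ℝ) ≤ Θ := le_trans zero_le_one hΘ1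
    rcases Nat.lt_succ_iff_lt_or_eq.mp (Nat.lt_succ_of_le ha) with h | h
    · have := hc f hf t Θ hΘ1 hΘ a (Nat.lt_succ_iff.mp h) i hi
      calc ‖iteratedFDeriv ℝ i (fun x => f x ^ a) t‖ ≤ c * Θ ^ a := this
        _ ≤ 2 ^ k * max 1 c * Θ ^ a := by
            have h1 : c ≤ 2 ^ k * max 1 c := by
              have hp : (1:ℝ) ≤ 2 ^ k := one_le_pow₀ one_le_two
              nlinarith [le_max_right (1:ℝ) c, le_max_left (1:ℝ) c]
            exact mul_le_mul_of_nonneg_right h1 (by positivity)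
    · subst h
      have hfm : ContDiff ℝ (k : ℕ) (fun x => f x ^ m) := hf.pow m
      have hik : (i : WithTop ℕ∞) ≤ (k : ℕ) := by exact_mod_cast hi
      have key := norm_iteratedFDeriv_mul_le (𝕜 := ℝ) hf hfm t hik
      have hpow : (fun x => f x ^ (m + 1)) = fun x => f x * f x ^ m := by
        funext x; ring
      rw [hpow]
      refine key.trans ?_
      have hterm : ∀ j ∈ Finset.range (i + 1),
          (i.choose j : ℝ) * ‖iteratedFDeriv ℝ j f t‖ *
            ‖iteratedFDeriv ℝ (i - j) (fun x => f x ^ m) t‖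
          ≤ (i.choose j : ℝ) * (max 1 c * Θ ^ (m + 1)) := by
        intro j hj
        have hj' : j ≤ k := le_trans (Nat.lt_succ_iff.mp (Finset.mem_range.mp hj)) hi
        have h1 : ‖iteratedFDeriv ℝ j f t‖ ≤ Θ := hΘ j hj'
        have h2 : ‖iteratedFDeriv ℝ (i - j) (fun x => f x ^ m) t‖ ≤ c * Θ ^ m :=
          hc f hf t Θ hΘ1 hΘ m le_rfl (i - j) (le_trans (Nat.sub_le i j) hi)
        have hcm : c ≤ max 1 c := le_max_right _ _
        have : ‖iteratedFDeriv ℝ j f t‖ *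
            ‖iteratedFDeriv ℝ (i - j) (fun x => f x ^ m) t‖ ≤ Θ * (c * Θ ^ m) := by
          exact mul_le_mul h1 h2 (norm_nonneg _) hΘ0
        calc (i.choose j : ℝ) * ‖iteratedFDeriv ℝ j f t‖ *
              ‖iteratedFDeriv ℝ (i - j) (fun x => f x ^ m) t‖
            = (i.choose j : ℝ) * (‖iteratedFDeriv ℝ j f t‖ *
              ‖iteratedFDeriv ℝ (i - j) (fun x => f x ^ m) t‖) := by ring
          _ ≤ (i.choose j : ℝ) * (Θ * (c * Θ ^ m)) := by
              exact mul_le_mul_of_nonneg_left this (Nat.cast_nonneg _)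
          _ ≤ (i.choose j : ℝ) * (max 1 c * Θ ^ (m + 1)) := by
              refine mul_le_mul_of_nonneg_left ?_ (Nat.cast_nonneg _)
              have : Θ * (c * Θ ^ m) = c * Θ ^ (m + 1) := by ring
              rw [this]
              exact mul_le_mul_of_nonneg_right hcm (by positivity)
      calc ∑ j ∈ Finset.range (i + 1), (i.choose j : ℝ) * ‖iteratedFDeriv ℝ j f t‖ *
              ‖iteratedFDeriv ℝ (i - j) (fun x => f x ^ m) t‖
          ≤ ∑ j ∈ Finset.range (i + 1), (i.choose j : ℝ) * (max 1 c * Θ ^ (m + 1)) :=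
            Finset.sum_le_sum hterm
        _ = (2 : ℝ) ^ i * (max 1 c * Θ ^ (m + 1)) := by
            rw [← Finset.sum_mul]
            norm_cast
            rw [Nat.sum_range_choose]
        _ ≤ 2 ^ k * max 1 c * Θ ^ (m + 1) := by
            have h2 : (2:ℝ) ^ i ≤ 2 ^ k := pow_le_pow_right₀ one_le_two hi
            have : (0:ℝ) ≤ max 1 c * Θ ^ (m + 1) := by positivity
            nlinarith [this]

/-- Algebra-valued skeleton of the key nonlinear estimate in Step 1 of the
proof of Theorem 4.10 of the paper: in a commutative Banach algebra `A`
over `ℝ` with `‖1‖ = 1`, for all `k` and `M ≥ 1` there is a constant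
`C = C(k,M)` such that for all `k`-times continuously differentiable
`u, v : ℝ → A` and all `t`,
`‖(u^M - v^M)^{(k)}(t)‖ ≤ C · Θ^{M-1} · ∑_{l=0}^k ‖(u-v)^{(l)}(t)‖`,
where `Θ = max(1, max_{0 ≤ i ≤ k} max(‖u^{(i)}(t)‖, ‖v^{(i)}(t)‖))`. -/
theorem pow_sub_pow_deriv_estimate
    {A : Type*} [NormedCommRing A] [NormedAlgebra ℝ A] [CompleteSpace A]
    [NormOneClass A]
    (k M : ℕ) (hM : 1 ≤ M) :
    ∃ C : ℝ, 0 ≤ C ∧ ∀ (u v : ℝ → A),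
      ContDiff ℝ (k : ℕ) u → ContDiff ℝ (k : ℕ) v → ∀ t : ℝ,
      ‖iteratedDeriv k (fun x => u x ^ M - v x ^ M) t‖
        ≤ C * (max 1 ((Finset.range (k + 1)).sup' Finset.nonempty_range_add_one
                (fun i => max ‖iteratedDeriv i u t‖ ‖iteratedDeriv i v t‖))) ^ (M - 1)
            * ∑ l ∈ Finset.range (k + 1),
                ‖iteratedDeriv l (fun x => u x - v x) t‖ := by
  obtain ⟨c, hc0, hc⟩ := pow_deriv_bound (A := A) k (M - 1)
  refine ⟨2 ^ k * (M * (2 ^ k * c ^ 2)), by positivity, fun u v hu hv t => ?_⟩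
  set Θ : ℝ := max 1 ((Finset.range (k + 1)).sup' Finset.nonempty_range_add_one
      (fun i => max ‖iteratedDeriv i u t‖ ‖iteratedDeriv i v t‖)) with hΘdef
  have hΘ1 : 1 ≤ Θ := le_max_left _ _
  have hΘ0 : (0:ℝ) ≤ Θ := le_trans zero_le_one hΘ1
  have hΘu : ∀ j ≤ k, ‖iteratedFDeriv ℝ j u t‖ ≤ Θ := by
    intro j hj
    rw [norm_iteratedFDeriv_eq_norm_iteratedDeriv]
    refine le_trans (le_max_left _ ‖iteratedDeriv j v t‖) (le_trans ?_ (le_max_right 1 _))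
    exact Finset.le_sup' (f := fun i => max ‖iteratedDeriv i u t‖ ‖iteratedDeriv i v t‖)
      (Finset.mem_range.mpr (Nat.lt_succ_of_le hj))
  have hΘv : ∀ j ≤ k, ‖iteratedFDeriv ℝ j v t‖ ≤ Θ := by
    intro j hj
    rw [norm_iteratedFDeriv_eq_norm_iteratedDeriv]
    refine le_trans (le_max_right ‖iteratedDeriv j u t‖ _) (le_trans ?_ (le_max_right 1 _))
    exact Finset.le_sup' (f := fun i => max ‖iteratedDeriv i u t‖ ‖iteratedDeriv i v t‖)
      (Finset.mem_range.mpr (Nat.lt_succ_of_le hj))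
  -- the geometric-sum factor
  set S : ℝ → A := fun x => ∑ j ∈ Finset.range M, u x ^ j * v x ^ (M - 1 - j) with hSdef
  have hScd : ContDiff ℝ (k : ℕ) S :=
    ContDiff.sum fun j _ => (hu.pow j).mul (hv.pow (M - 1 - j))
  -- bound on the derivatives of S
  have hSbound : ∀ i ≤ k, ‖iteratedFDeriv ℝ i S t‖ ≤ M * (2 ^ k * c ^ 2) * Θ ^ (M - 1) := by
    intro i hi
    have hrw : iteratedFDeriv ℝ i S t = ∑ j ∈ Finset.range M,
        iteratedFDeriv ℝ i (fun x => u x ^ j * v x ^ (M - 1 - j)) t := by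
      have := iteratedFDeriv_sum (𝕜 := ℝ) (u := Finset.range M)
        (f := fun j (x : ℝ) => u x ^ j * v x ^ (M - 1 - j)) (i := i)
        (fun j _ => ((hu.of_le (by exact_mod_cast hi)).pow j).mul
          ((hv.of_le (by exact_mod_cast hi)).pow (M - 1 - j)))
      calc iteratedFDeriv ℝ i S t = iteratedFDeriv ℝ i
            (fun x => ∑ j ∈ Finset.range M, (fun y => u y ^ j * v y ^ (M - 1 - j)) x) t := rfl
        _ = _ := by rw [this]; simp
    rw [hrw]
    refine (norm_sum_le _ _).trans ?_
    have hterm : ∀ j ∈ Finset.range M,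
        ‖iteratedFDeriv ℝ i (fun x => u x ^ j * v x ^ (M - 1 - j)) t‖
          ≤ 2 ^ k * c ^ 2 * Θ ^ (M - 1) := by
      intro j hj
      have hjM : j ≤ M - 1 := Nat.le_sub_one_of_lt (Finset.mem_range.mp hj)
      have hik : (i : WithTop ℕ∞) ≤ (k : ℕ) := by exact_mod_cast hi
      have key := norm_iteratedFDeriv_mul_le (𝕜 := ℝ) (hu.pow j) (hv.pow (M - 1 - j)) t hik
      refine key.trans ?_
      have hsub : j + (M - 1 - j) = M - 1 := Nat.add_sub_cancel' hjM
      have hterm2 : ∀ l ∈ Finset.range (i + 1),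
          (i.choose l : ℝ) * ‖iteratedFDeriv ℝ l (fun x => u x ^ j) t‖ *
            ‖iteratedFDeriv ℝ (i - l) (fun x => v x ^ (M - 1 - j)) t‖
          ≤ (i.choose l : ℝ) * (c ^ 2 * Θ ^ (M - 1)) := by
        intro l hl
        have hl' : l ≤ k := le_trans (Nat.lt_succ_iff.mp (Finset.mem_range.mp hl)) hi
        have h1 := hc u hu t Θ hΘ1 hΘu j hjM l hl'
        have h2 := hc v hv t Θ hΘ1 hΘv (M - 1 - j) (Nat.sub_le _ _) (i - l)
          (le_trans (Nat.sub_le i l) hi)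
        have hmul : ‖iteratedFDeriv ℝ l (fun x => u x ^ j) t‖ *
            ‖iteratedFDeriv ℝ (i - l) (fun x => v x ^ (M - 1 - j)) t‖
            ≤ (c * Θ ^ j) * (c * Θ ^ (M - 1 - j)) :=
          mul_le_mul h1 h2 (norm_nonneg _) (by positivity)
        have heq : (c * Θ ^ j) * (c * Θ ^ (M - 1 - j)) = c ^ 2 * Θ ^ (M - 1) := by
          rw [show (c * Θ ^ j) * (c * Θ ^ (M - 1 - j))
              = c ^ 2 * (Θ ^ j * Θ ^ (M - 1 - j)) by ring, ← pow_add, hsub]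
        calc (i.choose l : ℝ) * ‖iteratedFDeriv ℝ l (fun x => u x ^ j) t‖ *
              ‖iteratedFDeriv ℝ (i - l) (fun x => v x ^ (M - 1 - j)) t‖
            = (i.choose l : ℝ) * (‖iteratedFDeriv ℝ l (fun x => u x ^ j) t‖ *
              ‖iteratedFDeriv ℝ (i - l) (fun x => v x ^ (M - 1 - j)) t‖) := by ring
          _ ≤ (i.choose l : ℝ) * (c ^ 2 * Θ ^ (M - 1)) := by
              rw [← heq]; exact mul_le_mul_of_nonneg_left hmul (Nat.cast_nonneg _)
      calc ∑ l ∈ Finset.range (i + 1), (i.choose l : ℝ) *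
              ‖iteratedFDeriv ℝ l (fun x => u x ^ j) t‖ *
              ‖iteratedFDeriv ℝ (i - l) (fun x => v x ^ (M - 1 - j)) t‖
          ≤ ∑ l ∈ Finset.range (i + 1), (i.choose l : ℝ) * (c ^ 2 * Θ ^ (M - 1)) :=
            Finset.sum_le_sum hterm2
        _ = (2 : ℝ) ^ i * (c ^ 2 * Θ ^ (M - 1)) := by
            rw [← Finset.sum_mul]; norm_cast; rw [Nat.sum_range_choose]
        _ ≤ 2 ^ k * c ^ 2 * Θ ^ (M - 1) := by
            have h2 : (2:ℝ) ^ i ≤ 2 ^ k := pow_le_pow_right₀ one_le_two hi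
            have hpos : (0:ℝ) ≤ c ^ 2 * Θ ^ (M - 1) := by positivity
            nlinarith [hpos]
    calc ∑ j ∈ Finset.range M, ‖iteratedFDeriv ℝ i (fun x => u x ^ j * v x ^ (M - 1 - j)) t‖
        ≤ ∑ _j ∈ Finset.range M, (2 ^ k * c ^ 2 * Θ ^ (M - 1)) := Finset.sum_le_sum hterm
      _ = M * (2 ^ k * c ^ 2) * Θ ^ (M - 1) := by
          rw [Finset.sum_const, Finset.card_range, nsmul_eq_mul]; ring
  -- rewrite u^M - v^M = S * (u - v)
  have hfun : (fun x => u x ^ M - v x ^ M) = fun x => S x * (u x - v x) := by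
    funext x
    rw [hSdef]
    exact (geom_sum₂_mul (u x) (v x) M).symm
  rw [hfun, ← norm_iteratedFDeriv_eq_norm_iteratedDeriv]
  have hkk : (k : WithTop ℕ∞) ≤ (k : ℕ) := le_rfl
  have key := norm_iteratedFDeriv_mul_le (𝕜 := ℝ) hScd (hu.sub hv) t hkk
  refine key.trans ?_
  have hterm : ∀ l ∈ Finset.range (k + 1),
      (k.choose l : ℝ) * ‖iteratedFDeriv ℝ l S t‖ *
        ‖iteratedFDeriv ℝ (k - l) (fun x => u x - v x) t‖
      ≤ 2 ^ k * (M * (2 ^ k * c ^ 2)) * Θ ^ (M - 1) *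
        ‖iteratedFDeriv ℝ (k - l) (fun x => u x - v x) t‖ := by
    intro l hl
    have hl' : l ≤ k := Nat.lt_succ_iff.mp (Finset.mem_range.mp hl)
    have h1 : (k.choose l : ℝ) ≤ 2 ^ k := by
      have : k.choose l ≤ ∑ j ∈ Finset.range (k + 1), k.choose j :=
        Finset.single_le_sum (fun j _ => Nat.zero_le _)
          (Finset.mem_range.mpr (Nat.lt_succ_of_le hl'))
      rw [Nat.sum_range_choose] at this
      exact_mod_cast this
    have h2 := hSbound l hl'
    have hnn : (0:ℝ) ≤ ‖iteratedFDeriv ℝ (k - l) (fun x => u x - v x) t‖ := norm_nonneg _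
    have hmul : (k.choose l : ℝ) * ‖iteratedFDeriv ℝ l S t‖
        ≤ 2 ^ k * (M * (2 ^ k * c ^ 2) * Θ ^ (M - 1)) := by
      have hS0 : (0:ℝ) ≤ ‖iteratedFDeriv ℝ l S t‖ := norm_nonneg _
      have h2pos : (0:ℝ) ≤ (2:ℝ) ^ k := by positivity
      exact mul_le_mul h1 h2 hS0 h2pos
    calc (k.choose l : ℝ) * ‖iteratedFDeriv ℝ l S t‖ *
          ‖iteratedFDeriv ℝ (k - l) (fun x => u x - v x) t‖
        ≤ 2 ^ k * (M * (2 ^ k * c ^ 2) * Θ ^ (M - 1)) *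
          ‖iteratedFDeriv ℝ (k - l) (fun x => u x - v x) t‖ :=
          mul_le_mul_of_nonneg_right hmul hnn
      _ = 2 ^ k * (M * (2 ^ k * c ^ 2)) * Θ ^ (M - 1) *
          ‖iteratedFDeriv ℝ (k - l) (fun x => u x - v x) t‖ := by ring
  refine (Finset.sum_le_sum hterm).trans ?_
  rw [← Finset.mul_sum]
  have hsum : ∑ l ∈ Finset.range (k + 1),
      ‖iteratedFDeriv ℝ (k - l) (fun x => u x - v x) t‖
      = ∑ l ∈ Finset.range (k + 1), ‖iteratedDeriv l (fun x => u x - v x) t‖ := by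
    simp_rw [norm_iteratedFDeriv_eq_norm_iteratedDeriv]
    have := Finset.sum_range_reflect
      (fun l => ‖iteratedDeriv l (fun x => u x - v x) t‖) (k + 1)
    simpa using this
  rw [hsum]
end
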